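/- arXiv:2403.00916 — 9 statements merged into one kernel-verified Lean document; each statement's English description precedes it below -/
import Mathlib

section
/- For every natural number d ≥ 2, the Minkowski causal order on M_d := ℝ × EuclideanSpace ℝ (Fin d) is a conical poset: for all nonempty finite subsets L₁, L₂ ⊆ M_d, if f(L₁) = f(L₂) then span(L₁) = span(L₂). -/
/-- `d+1`-dimensional Minkowski space-time `M_d := ℝ × EuclideanSpace ℝ (Fin d)`,
as a pair of a time coordinate and a space coordinate. -/
structure Mink (d : ℕ) where
  t : ℝ
  x : EuclideanSpace ℝ (Fin d)

/-- The Minkowski causal order: `(t,x) ⪯ (s,y)` iff `‖y − x‖ ≤ s − t`. -/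
instance (d : ℕ) : PartialOrder (Mink d) where
  le p q := ‖q.x - p.x‖ ≤ q.t - p.t
  le_refl p := by simp
  le_trans p q r hpq hqr := by
    have hpq' : ‖q.x - p.x‖ ≤ q.t - p.t := hpq
    have hqr' : ‖r.x - q.x‖ ≤ r.t - q.t := hqr
    have htri : ‖r.x - p.x‖ ≤ ‖r.x - q.x‖ + ‖q.x - p.x‖ :=
      norm_sub_le_norm_sub_add_norm_sub _ _ _
    show ‖r.x - p.x‖ ≤ r.t - p.t
    linarith
  le_antisymm p q hpq hqp := by
    have hpq' : ‖q.x - p.x‖ ≤ q.t - p.t := hpq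
    have hqp' : ‖p.x - q.x‖ ≤ p.t - q.t := hqp
    have hrev : ‖p.x - q.x‖ = ‖q.x - p.x‖ := norm_sub_rev _ _
    have hnn : (0:ℝ) ≤ ‖q.x - p.x‖ := norm_nonneg _
    have hx0 : ‖q.x - p.x‖ = 0 := by linarith
    have hx : q.x = p.x := sub_eq_zero.mp (norm_eq_zero.mp hx0)
    have ht : p.t = q.t := by linarith
    cases p; cases q; simp_all

/-- The causal future `J⁺(p) = {q : p ≤ q}` of a point in a partially ordered set. -/
def Jplus {T : Type*} [PartialOrder T] (p : T) : Set T := {q : T | p ≤ q}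

/-- The joint future `f(L) = ⋂_{p ∈ L} J⁺(p)` of a subset of a poset (with `f(∅) = T`). -/
def jointFuture {T : Type*} [PartialOrder T] (L : Set T) : Set T := ⋂ p ∈ L, Jplus p

/-- The spanning set `span(L)`: the union of all subsets `L' ⊆ L` with
`f(L') = f(L)` such that no strict subset `L'' ⊊ L'` satisfies `f(L'') = f(L)`. -/
def spanS {T : Type*} [PartialOrder T] (L : Set T) : Set T :=
  {x : T | ∃ L' : Set T, L' ⊆ L ∧ x ∈ L' ∧ jointFuture L' = jointFuture L ∧
    ∀ L'' : Set T, L'' ⊂ L' → jointFuture L'' ≠ jointFuture L}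

/-- A poset is conical if for all nonempty finite subsets `L₁, L₂`,
`f(L₁) = f(L₂)` implies `span(L₁) = span(L₂)`. -/
def Conical (T : Type*) [PartialOrder T] : Prop :=
  ∀ L₁ L₂ : Set T, L₁.Finite → L₂.Finite → L₁.Nonempty → L₂.Nonempty →
    jointFuture L₁ = jointFuture L₂ → spanS L₁ = spanS L₂

/-! If `L` has no proper subset with the same joint future and `K` is finite with the same
joint future, then `L ⊆ K`; hence a spanning set is the union of all such minimal sets and
depends only on the joint future. For `L ⊆ K`, take `p ∈ L \ K` and `z` in the joint future of
`L \ {p}` but not in `J⁺(p)`. The points of the future light cone of `p` over a neighbourhood of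
`z.x` lie in the joint future of `L` and `K`, but cannot be moved down in time while staying there;
since `K` is finite, each lies on the light cone of some `k ∈ K`, `k ≠ p`. For `d ≥ 2` each such
intersection of two cones is nowhere dense, contradicting the Baire category theorem. -/

open Set Metric Filter Topology Module RealInnerProductSpace

section Irredundant

variable {T : Type*} [PartialOrder T]

def IsIrredundant (L : Set T) : Prop :=
  ∀ L' : Set T, L' ⊂ L → jointFuture L' ≠ jointFuture L

lemma mem_jointFuture {L : Set T} {z : T} : z ∈ jointFuture L ↔ ∀ q ∈ L, q ≤ z := by
  simp [jointFuture, Jplus]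

lemma jointFuture_anti {L M : Set T} (h : L ⊆ M) : jointFuture M ⊆ jointFuture L :=
  fun _ hz => mem_jointFuture.2 fun q hq => mem_jointFuture.1 hz q (h hq)

lemma IsIrredundant.exists_not_le {L : Set T} (hL : IsIrredundant L) {p : T} (hp : p ∈ L) :
    ∃ z ∈ jointFuture (L \ {p}), ¬ p ≤ z := by
  obtain ⟨z, hz, hzL⟩ := exists_of_ssubset <|
    (jointFuture_anti sdiff_subset).ssubset_of_ne (hL _ (sdiff_singleton_ssubset.2 hp)).symm
  refine ⟨z, hz, fun hpz => hzL (mem_jointFuture.2 fun q hq => ?_)⟩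
  obtain rfl | hqp := eq_or_ne q p
  · exact hpz
  · exact mem_jointFuture.1 hz q ⟨hq, hqp⟩

lemma conical_of_isIrredundant_subset
    (h : ∀ L K : Set T, K.Finite → IsIrredundant L → jointFuture K = jointFuture L → L ⊆ K) :
    Conical T := by
  have hspan : ∀ A B : Set T, B.Finite → jointFuture A = jointFuture B → spanS A ⊆ spanS B := by
    rintro A B hB hAB x ⟨L, hLA, hxL, hLf, hLmin⟩
    have hL : IsIrredundant L := fun L' hL' => hLf ▸ hLmin L' hL'
    exact ⟨L, h L B hB hL (hAB ▸ hLf).symm, hxL, hLf.trans hAB, hAB ▸ hLmin⟩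
  exact fun L₁ L₂ h₁ h₂ _ _ h12 => (hspan _ _ h₂ h12).antisymm (hspan _ _ h₁ h12.symm)

end Irredundant

section InnerProductSpace

variable {E : Type*} [NormedAddCommGroup E] [InnerProductSpace ℝ E]

lemma exists_ne_zero_inner_eq_zero [FiniteDimensional ℝ E] (hE : 2 ≤ finrank ℝ E) (a : E) :
    ∃ v ≠ 0, ⟪a, v⟫ = 0 := by
  have hspan : finrank ℝ (ℝ ∙ a) ≤ 1 := by
    simpa using finrank_span_le_card ({a} : Set E)
  have hperp : (ℝ ∙ a)ᗮ ≠ ⊥ := by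
    rw [Ne, ← Submodule.finrank_eq_zero]
    have := (ℝ ∙ a).finrank_add_finrank_orthogonal
    omega
  obtain ⟨v, hv, hv0⟩ := Submodule.ne_bot_iff _ |>.1 hperp
  exact ⟨v, hv0, Submodule.mem_orthogonal_singleton_iff_inner_right.1 hv⟩

lemma isNowhereDense_setOf_norm_sub_eq [FiniteDimensional ℝ E] (hE : 2 ≤ finrank ℝ E)
    {a : E} {c : ℝ} (hac : a ≠ 0 ∨ c ≠ 0) : IsNowhereDense {y : E | ‖y - a‖ = ‖y‖ - c} := by
  set S := {y : E | ‖y - a‖ = ‖y‖ - c}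
  have hclosed : IsClosed S := isClosed_eq (by fun_prop) (by fun_prop)
  rw [hclosed.isNowhereDense_iff, eq_empty_iff_forall_notMem]
  intro w hw
  have hsq : ∀ y ∈ S, 2 * c * ‖y‖ = 2 * ⟪y, a⟫ - ‖a‖ ^ 2 + c ^ 2 := by
    intro y hy
    have := congrArg (· ^ 2) hy
    simp only [norm_sub_sq_real] at this
    linarith
  have hline : ∀ v : E, ∃ s ≠ (0 : ℝ), w + s • v ∈ S ∧ w - s • v ∈ S := by
    intro v
    have hS : S ∈ 𝓝 w := mem_interior_iff_mem_nhds.1 hw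
    have hadd : Tendsto (fun s : ℝ => w + s • v) (𝓝 0) (𝓝 w) :=
      Continuous.tendsto' (by fun_prop) 0 w (by simp)
    have hsub : Tendsto (fun s : ℝ => w - s • v) (𝓝 0) (𝓝 w) :=
      Continuous.tendsto' (by fun_prop) 0 w (by simp)
    obtain ⟨s, ⟨h1, h2⟩, hs⟩ := ((((hadd.eventually hS).and (hsub.eventually hS)).filter_mono
      nhdsWithin_le_nhds).and (self_mem_nhdsWithin (s := {0}ᶜ))).exists
    exact ⟨s, hs, h1, h2⟩
  -- For `c = 0`, `hsq` says `S` lies in a hyperplane; otherwise `‖·‖` is affine near `w`,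
  -- which fails along a direction orthogonal to `a`.
  rcases eq_or_ne c 0 with rfl | hc
  · have ha : a ≠ 0 := hac.resolve_right (not_not.2 rfl)
    obtain ⟨s, hs, hadd, -⟩ := hline a
    have h0 := hsq w (interior_subset hw)
    have h1 := hsq _ hadd
    rw [inner_add_left, real_inner_smul_left, real_inner_self_eq_norm_sq] at h1
    exact mul_ne_zero hs (pow_ne_zero 2 (norm_ne_zero_iff.2 ha)) (by linarith)
  · obtain ⟨v, hv0, hav⟩ := exists_ne_zero_inner_eq_zero hE a
    obtain ⟨s, hs, hadd, hsub⟩ := hline v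
    have hva : ⟪s • v, a⟫ = 0 := by rw [real_inner_smul_left, real_inner_comm, hav, mul_zero]
    have h0 := hsq w (interior_subset hw)
    have h1 := hsq _ hadd
    have h2 := hsq _ hsub
    rw [inner_add_left, hva, add_zero] at h1
    rw [inner_sub_left, hva, sub_zero] at h2
    have h2c : 2 * c ≠ 0 := mul_ne_zero two_ne_zero hc
    have hnormAdd : ‖w + s • v‖ = ‖w‖ := mul_left_cancel₀ h2c (by linarith)
    have hnormSub : ‖w - s • v‖ = ‖w‖ := mul_left_cancel₀ h2c (by linarith)
    have hpar := parallelogram_law_with_norm ℝ w (s • v)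
    rw [hnormAdd, hnormSub] at hpar
    exact pow_ne_zero 2 (norm_ne_zero_iff.2 (smul_ne_zero hs hv0)) (by linarith)

end InnerProductSpace

namespace Mink

variable {d : ℕ}

lemma le_iff {p q : Mink d} : p ≤ q ↔ ‖q.x - p.x‖ ≤ q.t - p.t := Iff.rfl

def lightCone (p : Mink d) : Set (Mink d) := {q | ‖q.x - p.x‖ = q.t - p.t}

noncomputable def onCone (p : Mink d) (y : EuclideanSpace ℝ (Fin d)) : Mink d :=
  ⟨p.t + ‖y‖, p.x + y⟩

lemma le_onCone (p : Mink d) (y : EuclideanSpace ℝ (Fin d)) : p ≤ onCone p y := by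
  simp [le_iff, onCone]

lemma le_onCone_of_le {p q z : Mink d} {y : EuclideanSpace ℝ (Fin d)} (hqz : q ≤ z)
    (hy : 2 * ‖y - (z.x - p.x)‖ ≤ ‖z.x - p.x‖ - (z.t - p.t)) : q ≤ onCone p y := by
  have hx : (onCone p y).x - q.x = (z.x - q.x) + (y - (z.x - p.x)) := by simp [onCone]; abel
  have htri := norm_add_le (z.x - q.x) (y - (z.x - p.x))
  have hrev := norm_sub_norm_le (z.x - p.x) y
  rw [norm_sub_rev (z.x - p.x) y] at hrev
  rw [le_iff] at hqz ⊢
  rw [hx]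
  simp only [onCone]
  linarith

lemma exists_mem_lightCone {K : Set (Mink d)} (hK : K.Finite) {w : Mink d}
    (hw : w ∈ jointFuture K) (hlow : ∀ δ > 0, (⟨w.t - δ, w.x⟩ : Mink d) ∉ jointFuture K) :
    ∃ k ∈ K, w ∈ lightCone k := by
  by_contra! hK'
  have hlt : ∀ k ∈ K, ‖w.x - k.x‖ < w.t - k.t := fun k hk =>
    (le_iff.1 (mem_jointFuture.1 hw k hk)).lt_of_ne (hK' k hk)
  have hev : ∀ᶠ δ in 𝓝[>] (0 : ℝ), (⟨w.t - δ, w.x⟩ : Mink d) ∈ jointFuture K := by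
    simp only [mem_jointFuture, le_iff, hK.eventually_all]
    exact fun k hk => nhdsWithin_le_nhds <| (eventually_lt_nhds (sub_pos.2 (hlt k hk))).mono
      fun δ hδ => by linarith
  obtain ⟨δ, hδ, hδpos⟩ := (hev.and self_mem_nhdsWithin).exists
  exact hlow δ hδpos hδ

lemma isNowhereDense_onCone_preimage_lightCone (hd : 2 ≤ d) {p k : Mink d} (hkp : k ≠ p) :
    IsNowhereDense (onCone p ⁻¹' lightCone k) := by
  have hac : k.x - p.x ≠ 0 ∨ k.t - p.t ≠ 0 := by
    by_contra! h
    exact hkp (by cases k; cases p; simp_all [sub_eq_zero])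
  have hset : onCone p ⁻¹' lightCone k = {y | ‖y - (k.x - p.x)‖ = ‖y‖ - (k.t - p.t)} := by
    ext y
    simp only [mem_preimage, lightCone, onCone, mem_ofPred_eq]
    rw [show p.x + y - k.x = y - (k.x - p.x) by abel,
      show p.t + ‖y‖ - k.t = ‖y‖ - (k.t - p.t) by ring]
  rw [hset]
  exact isNowhereDense_setOf_norm_sub_eq (by rwa [finrank_euclideanSpace_fin]) hac

lemma subset_of_isIrredundant (hd : 2 ≤ d) {L K : Set (Mink d)} (hK : K.Finite)
    (hL : IsIrredundant L) (hKL : jointFuture K = jointFuture L) : L ⊆ K := by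
  intro p hp
  by_contra hpK
  obtain ⟨z, hz, hpz⟩ := hL.exists_not_le hp
  set y₀ := z.x - p.x
  set s := ‖y₀‖ - (z.t - p.t)
  have hs : 0 < s := by rw [le_iff] at hpz; linarith
  have hcov : ball y₀ (s / 2) ⊆ ⋃ k ∈ K, onCone p ⁻¹' lightCone k := by
    intro y hy
    rw [mem_ball, dist_eq_norm] at hy
    have hyL : onCone p y ∈ jointFuture L := mem_jointFuture.2 fun q hq => by
      obtain rfl | hqp := eq_or_ne q p
      · exact le_onCone q y
      · exact le_onCone_of_le (mem_jointFuture.1 hz q ⟨hq, hqp⟩) (by linarith)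
    have hlow : ∀ δ > 0, (⟨(onCone p y).t - δ, (onCone p y).x⟩ : Mink d) ∉ jointFuture L :=
      fun δ hδ h => by
        have := le_iff.1 (mem_jointFuture.1 h p hp)
        simp only [onCone, add_sub_cancel_left] at this
        linarith
    rw [← hKL] at hyL hlow
    simpa using exists_mem_lightCone hK hyL hlow
  refine not_isMeagre_of_isOpen isOpen_ball ⟨y₀, mem_ball_self (half_pos hs)⟩ ?_
  exact (isMeagre_biUnion hK.countable fun k hk =>
    (isNowhereDense_onCone_preimage_lightCone hd (ne_of_mem_of_not_mem hk hpK)).isMeagre).mono hcov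

end Mink

/-- For every `d ≥ 2`, Minkowski space-time `M_d` with the Minkowski causal order
is a conical poset. -/
theorem mink_conical (d : ℕ) (hd : 2 ≤ d) : Conical (Mink d) :=
  conical_of_isIrredundant_subset fun _ _ hK hL hKL => Mink.subset_of_isIrredundant hd hK hL hKL
end

section
/- Every conical poset is join-free: if T is a conical partially ordered set and a, b ∈ T are such that {a, b} has a least upper bound, then a ≤ b or b ≤ a. -/
/-!
The joint future of a set is its set of upper bounds, so if `m` is the least upper bound of
`{a, b}` then `{a, b}` and `{m}` have the same joint future `J⁺(m)`. Unless `m` is the bottom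
element (in which case `a = b = m`), `{m}` is already minimal, so `m ∈ span {m}`; conicality
then gives `m ∈ span {a, b} ⊆ {a, b}`, and `m ∈ {a, b}` makes `a` and `b` comparable.
-/

section

variable {T : Type*} [PartialOrder T]

theorem jointFuture_eq_upperBounds (L : Set T) : jointFuture L = upperBounds L := by
  ext x
  simp [jointFuture, Jplus, upperBounds]

theorem spanS_subset (L : Set T) : spanS L ⊆ L :=
  fun _ ⟨_, hsub, hx, _⟩ => hsub hx

theorem mem_spanS_singleton {p : T} (hp : ¬IsBot p) : p ∈ spanS {p} := by
  refine ⟨{p}, subset_rfl, rfl, rfl, fun L'' hL'' heq => hp ?_⟩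
  rw [Set.ssubset_singleton_iff.mp hL'', jointFuture_eq_upperBounds, jointFuture_eq_upperBounds,
    upperBounds_empty, upperBounds_singleton] at heq
  exact fun q => (heq ▸ Set.mem_univ q : q ∈ Set.Ici p)

theorem Conical.mem_of_isLUB (hT : Conical T) {s : Set T} {m : T} (hfin : s.Finite)
    (hne : s.Nonempty) (h : IsLUB s m) (hm : ¬IsBot m) : m ∈ s := by
  have hfut : jointFuture s = jointFuture {m} := by
    rw [jointFuture_eq_upperBounds, jointFuture_eq_upperBounds, h.upperBounds_eq,
      upperBounds_singleton]
  have hspan := hT s {m} hfin (Set.finite_singleton m) hne (Set.singleton_nonempty m) hfut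
  exact spanS_subset s (hspan ▸ mem_spanS_singleton hm)

end

/-- Every conical poset is join-free: if `{a, b}` has a least upper bound,
then `a` and `b` are comparable. -/
theorem conical_joinFree {T : Type*} [PartialOrder T] (hT : Conical T)
    (a b m : T) (h : IsLUB ({a, b} : Set T) m) : a ≤ b ∨ b ≤ a := by
  have ham : a ≤ m := h.1 (Set.mem_insert a {b})
  have hbm : b ≤ m := h.1 (Set.mem_insert_of_mem a rfl)
  by_cases hm : IsBot m
  · exact Or.inl (hm.mono ham b)
  rcases hT.mem_of_isLUB (Set.toFinite _) (Set.insert_nonempty a {b}) h hm with rfl | rfl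
  · exact Or.inr hbm
  · exact Or.inl ham
end

section
/- Let D be an intervention family on V whose induced affects relations contain no relation that is Clus₃. Let T be any partially ordered set and O : V → T a map such that compat holds. Then for every affects relation X ⊨ Y|do(Z) that holds and is both Irred₁ and Irred₃, one has F̄_s(Y) ⊆ F̄_s(X) ∩ F̄_s(Z). -/
/-- An intervention family on a finite type `V` of observed variables with value
types `α i`: to every finite subset `I ⊆ V` and every assignment of values on `I`
it assigns a probability mass function on full assignments. -/
abbrev InterventionFamily (V : Type) [DecidableEq V] (α : V → Type) : Type :=
  ∀ I : Finset V, (∀ i : I, α i) → PMF (∀ i, α i)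

/-- Restriction of a full assignment to the coordinates in `Y`. -/
def restrictTo {V : Type} {α : V → Type} (Y : Finset V) (g : ∀ i, α i) :
    ∀ i : Y, α i := fun i => g i

/-- Combination of an assignment on `X` and an assignment on `Z` into an
assignment on `X ∪ Z` (giving precedence to the one on `X`). -/
def combine {V : Type} [DecidableEq V] {α : V → Type} {X Z : Finset V}
    (xv : ∀ i : X, α i) (zv : ∀ i : Z, α i) : ∀ i : (X ∪ Z : Finset V), α i :=
  fun i => if h : (i : V) ∈ X then xv ⟨i, h⟩
    else zv ⟨i, (Finset.mem_union.mp i.2).resolve_left h⟩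

/-- The affects relation `X ⊨ Y|do(Z)`: there exist assignments `x` on `X` and `z`
on `Z` such that the marginal on `Y` of the intervened distribution `D (X∪Z) (x⊕z)`
differs from the marginal on `Y` of `D Z z`. -/
def affects {V : Type} [DecidableEq V] {α : V → Type}
    (D : InterventionFamily V α) (X Y Z : Finset V) : Prop :=
  ∃ (xv : ∀ i : X, α i) (zv : ∀ i : Z, α i),
    PMF.map (restrictTo Y) (D (X ∪ Z) (combine xv zv)) ≠
      PMF.map (restrictTo Y) (D Z zv)

/-- `X ⊨ Y|do(Z)` is Clus₃ if it holds, `Z ≠ ∅`, and no `s_Z ⊊ Z` satisfies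
`X ⊨ Y|do(s_Z)`. -/
def Clus3 {V : Type} [DecidableEq V] {α : V → Type}
    (D : InterventionFamily V α) (X Y Z : Finset V) : Prop :=
  affects D X Y Z ∧ Z.Nonempty ∧
    ∀ sZ : Finset V, sZ ⊂ Z → ¬ affects D X Y sZ

/-- `X ⊨ Y|do(Z)` is Irred₁ if for every nonempty `s_X ⊊ X`,
`s_X ⊨ Y|do((X∖s_X) ∪ Z)` holds. -/
def Irred1 {V : Type} [DecidableEq V] {α : V → Type}
    (D : InterventionFamily V α) (X Y Z : Finset V) : Prop :=
  ∀ sX : Finset V, sX ⊆ X → sX.Nonempty → sX ≠ X → affects D sX Y ((X \ sX) ∪ Z)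

/-- `X ⊨ Y|do(Z)` is Irred₃ if for every nonempty `s_Z ⊆ Z`,
`s_Z ⊨ Y|do(X ∪ (Z∖s_Z))` holds or `s_Z ⊨ Y|do(Z∖s_Z)` holds. -/
def Irred3 {V : Type} [DecidableEq V] {α : V → Type}
    (D : InterventionFamily V α) (X Y Z : Finset V) : Prop :=
  ∀ sZ : Finset V, sZ ⊆ Z → sZ.Nonempty →
    (affects D sZ Y (X ∪ (Z \ sZ)) ∨ affects D sZ Y (Z \ sZ))

/-- The support future `F̄_s(W) = ⋂_{w ∈ W} {t : O w ≤ t}` of a finite set of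
variables under an embedding `O` into a space-time (with `F̄_s(∅) = T`). -/
def suppFuture {V : Type} {T : Type*} [PartialOrder T] (O : V → T) (W : Finset V) :
    Set T := ⋂ w ∈ W, {t : T | O w ≤ t}

/-- The embedding `O` satisfies compat if for every holding affects relation
`X ⊨ Y|do(Z)` (on pairwise disjoint finite sets with `X, Y` nonempty) that is
Irred₁, one has `F̄_s(Y ∪ Z) ⊆ F̄_s(X)`. -/
def Compat {V : Type} [DecidableEq V] {α : V → Type} {T : Type*} [PartialOrder T]
    (D : InterventionFamily V α) (O : V → T) : Prop :=
  ∀ X Y Z : Finset V, Disjoint X Y → Disjoint X Z → Disjoint Y Z →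
    X.Nonempty → Y.Nonempty → affects D X Y Z → Irred1 D X Y Z →
    suppFuture O (Y ∪ Z) ⊆ suppFuture O X

/-!
Without Clus₃ relations every holding relation `s ⊨ Y|do(C)` descends, by repeatedly shrinking
`C`, to the unconditional relation `s ⊨ Y`; for a single variable `s = {v}` the relation
`{v} ⊨ Y` is trivially Irred₁, so compat gives `F̄_s(Y) ⊆ F̄_s({v})`. Irred₁ (or the relation
itself, when `X` is a singleton) provides such a relation for every `v ∈ X`, and Irred₃ one for
every `v ∈ Z`.
-/

section

variable {V : Type} {T : Type*} [PartialOrder T]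

theorem subset_suppFuture_iff (O : V → T) (S : Set T) (W : Finset V) :
    S ⊆ suppFuture O W ↔ ∀ w ∈ W, S ⊆ {t | O w ≤ t} :=
  Set.subset_iInter₂_iff

theorem suppFuture_singleton (O : V → T) (v : V) : suppFuture O {v} = {t | O v ≤ t} := by
  simp [suppFuture]

variable [DecidableEq V] {α : V → Type}

theorem irred1_singleton (D : InterventionFamily V α) (v : V) (Y Z : Finset V) :
    Irred1 D {v} Y Z := by
  intro sX hsub hne hne'
  rcases Finset.subset_singleton_iff.mp hsub with rfl | rfl
  · exact absurd hne Finset.not_nonempty_empty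
  · exact absurd rfl hne'

theorem affects_empty_of_affects (D : InterventionFamily V α)
    (hnoclus : ∀ X Y Z : Finset V, Disjoint X Y → Disjoint X Z → Disjoint Y Z →
      X.Nonempty → Y.Nonempty → ¬ Clus3 D X Y Z)
    {X Y : Finset V} (hXY : Disjoint X Y) (hX : X.Nonempty) (hY : Y.Nonempty)
    (Z : Finset V) (hXZ : Disjoint X Z) (hYZ : Disjoint Y Z) (haff : affects D X Y Z) :
    affects D X Y ∅ := by
  induction Z using Finset.strongInduction with
  | _ Z ih =>
    rcases Z.eq_empty_or_nonempty with rfl | hZ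
    · exact haff
    · have hnot := hnoclus X Y Z hXY hXZ hYZ hX hY
      simp only [Clus3, not_and, not_forall, not_not] at hnot
      obtain ⟨sZ, hsZ, haff'⟩ := hnot haff hZ
      exact ih sZ hsZ (hXZ.mono_right hsZ.subset) (hYZ.mono_right hsZ.subset) haff'

theorem suppFuture_subset_of_affects_singleton (D : InterventionFamily V α)
    (hnoclus : ∀ X Y Z : Finset V, Disjoint X Y → Disjoint X Z → Disjoint Y Z →
      X.Nonempty → Y.Nonempty → ¬ Clus3 D X Y Z)
    {O : V → T} (hc : Compat D O) ⦃v : V⦄ ⦃Y C : Finset V⦄ (hY : Y.Nonempty)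
    (hvY : v ∉ Y) (hvC : v ∉ C) (hYC : Disjoint Y C) (haff : affects D {v} Y C) :
    suppFuture O Y ⊆ {t | O v ≤ t} := by
  have hvY' : Disjoint {v} Y := Finset.disjoint_singleton_left.mpr hvY
  have haff₀ := affects_empty_of_affects D hnoclus hvY' (Finset.singleton_nonempty v) hY C
    (Finset.disjoint_singleton_left.mpr hvC) hYC haff
  have := hc {v} Y ∅ hvY' (Finset.disjoint_empty_right _) (Finset.disjoint_empty_right _)
    (Finset.singleton_nonempty v) hY haff₀ (irred1_singleton D v Y ∅)
  rwa [Finset.union_empty, suppFuture_singleton] at this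

end

theorem compat_no_clus3_general {V : Type} [DecidableEq V] {α : V → Type}
    (D : InterventionFamily V α)
    (hnoclus : ∀ X Y Z : Finset V, Disjoint X Y → Disjoint X Z → Disjoint Y Z →
      X.Nonempty → Y.Nonempty → ¬ Clus3 D X Y Z)
    {T : Type*} [PartialOrder T] (O : V → T) (hc : Compat D O)
    (X Y Z : Finset V)
    (hXY : Disjoint X Y) (hXZ : Disjoint X Z) (hYZ : Disjoint Y Z)
    (hY : Y.Nonempty)
    (haff : affects D X Y Z) (h1 : Irred1 D X Y Z) (h3 : Irred3 D X Y Z) :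
    suppFuture O Y ⊆ suppFuture O X ∩ suppFuture O Z := by
  have key := suppFuture_subset_of_affects_singleton D hnoclus hc
  rw [Set.subset_inter_iff, subset_suppFuture_iff, subset_suppFuture_iff]
  constructor
  · intro x hx
    have hxY : x ∉ Y := Finset.disjoint_left.mp hXY hx
    by_cases hXx : {x} = X
    · subst hXx
      exact key hY hxY (Finset.disjoint_singleton_left.mp hXZ) hYZ haff
    · refine key hY hxY ?_ ?_ (h1 {x} (by simpa) (Finset.singleton_nonempty x) hXx)
      · simp [Finset.disjoint_left.mp hXZ hx]
      · exact Finset.disjoint_union_right.mpr ⟨hXY.symm.mono_right Finset.sdiff_subset, hYZ⟩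
  · intro z hz
    have hzY : z ∉ Y := Finset.disjoint_right.mp hYZ hz
    have hYZz : Disjoint Y (Z \ {z}) := hYZ.mono_right Finset.sdiff_subset
    rcases h3 {z} (by simpa) (Finset.singleton_nonempty z) with haffz | haffz
    · refine key hY hzY ?_ (Finset.disjoint_union_right.mpr ⟨hXY.symm, hYZz⟩) haffz
      simp [Finset.disjoint_right.mp hXZ hz]
    · exact key hY hzY (by simp) hYZz haffz

/-- If the affects relations induced by `D` contain no Clus₃ relation and the
embedding `O` into an arbitrary space-time satisfies compat, then every holding
affects relation `X ⊨ Y|do(Z)` that is both Irred₁ and Irred₃ satisfies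
`F̄_s(Y) ⊆ F̄_s(X) ∩ F̄_s(Z)`. -/
theorem compat_no_clus3 {V : Type} [Fintype V] [DecidableEq V] {α : V → Type}
    [∀ i, Fintype (α i)] [∀ i, Nonempty (α i)]
    (D : InterventionFamily V α)
    (hnoclus : ∀ X Y Z : Finset V, Disjoint X Y → Disjoint X Z → Disjoint Y Z →
      X.Nonempty → Y.Nonempty → ¬ Clus3 D X Y Z)
    {T : Type*} [PartialOrder T] (O : V → T) (hc : Compat D O)
    (X Y Z : Finset V)
    (hXY : Disjoint X Y) (hXZ : Disjoint X Z) (hYZ : Disjoint Y Z)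
    (hX : X.Nonempty) (hY : Y.Nonempty)
    (haff : affects D X Y Z) (h1 : Irred1 D X Y Z) (h3 : Irred3 D X Y Z) :
    suppFuture O Y ⊆ suppFuture O X ∩ suppFuture O Z :=
  compat_no_clus3_general D hnoclus O hc X Y Z hXY hXZ hYZ hY haff h1 h3
end

section
/- Let D be an intervention family on V and let X, Y, Z be pairwise disjoint finite subsets of V with X, Y nonempty. If X ⊨ Y|do(Z) holds and is Red₁, i.e., there is a nonempty s_X ⊊ X with s_X ⊭ Y|do((X∖s_X) ∪ Z), then (X∖s_X) ⊨ Y|do(Z) holds; in particular there exists a nonempty strict subset s̃_X ⊊ X with s̃_X ⊨ Y|do(Z). -/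
open Finset

/-- Transports assignments across `Finset` equalities that do not hold definitionally. -/
theorem congr_assignment {V : Type} {α : V → Type} {β : Sort*}
    (F : ∀ I : Finset V, (∀ i : I, α i) → β) {A B : Finset V} (h : A = B)
    {a : ∀ i : A, α i} {b : ∀ i : B, α i}
    (hab : ∀ (i : V) (hi : i ∈ A), a ⟨i, hi⟩ = b ⟨i, h ▸ hi⟩) : F A a = F B b := by
  subst h
  congr 1
  funext i
  exact hab i i.2

section combine

variable {V : Type} [DecidableEq V] {α : V → Type} {X Z : Finset V}

theorem combine_of_mem (xv : ∀ i : X, α i) (zv : ∀ i : Z, α i) {i : V} (hi : i ∈ X ∪ Z)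
    (hiX : i ∈ X) : combine xv zv ⟨i, hi⟩ = xv ⟨i, hiX⟩ :=
  dif_pos hiX

theorem combine_of_notMem (xv : ∀ i : X, α i) (zv : ∀ i : Z, α i) {i : V} (hi : i ∈ X ∪ Z)
    (hiX : i ∉ X) : combine xv zv ⟨i, hi⟩ = zv ⟨i, (mem_union.mp hi).resolve_left hiX⟩ :=
  dif_neg hiX

theorem apply_combine_restrict₂_sdiff {β : Sort*}
    (F : ∀ I : Finset V, (∀ i : I, α i) → β) {S : Finset V} (hS : S ⊆ X)
    (xv : ∀ i : X, α i) (zv : ∀ i : Z, α i) :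
    F (S ∪ (X \ S ∪ Z)) (combine (restrict₂ hS xv) (combine (restrict₂ sdiff_subset xv) zv)) =
      F (X ∪ Z) (combine xv zv) := by
  refine congr_assignment F (by rw [← union_assoc, union_sdiff_of_subset hS]) fun i hi => ?_
  by_cases hiS : i ∈ S
  · rw [combine_of_mem _ _ _ hiS, combine_of_mem _ _ _ (hS hiS)]
    rfl
  rw [combine_of_notMem _ _ _ hiS]
  by_cases hiX : i ∈ X
  · have hiR : i ∈ X \ S := mem_sdiff.mpr ⟨hiX, hiS⟩
    rw [combine_of_mem _ _ _ hiR, combine_of_mem _ _ _ hiX]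
    rfl
  · have hiR : i ∉ X \ S := fun h => hiX (mem_sdiff.mp h).1
    rw [combine_of_notMem _ _ _ hiR, combine_of_notMem _ _ _ hiX]

end combine

theorem affects_sdiff_of_not_affects {V : Type} [DecidableEq V] {α : V → Type}
    {D : InterventionFamily V α} {X Y Z S : Finset V} (hS : S ⊆ X)
    (hX : affects D X Y Z) (hS_null : ¬ affects D S Y (X \ S ∪ Z)) :
    affects D (X \ S) Y Z := by
  obtain ⟨xv, zv, hne⟩ := hX
  refine ⟨restrict₂ sdiff_subset xv, zv, ?_⟩
  simp only [affects, not_exists, not_not] at hS_null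
  have h_null := hS_null (restrict₂ hS xv) (combine (restrict₂ sdiff_subset xv) zv)
  rw [apply_combine_restrict₂_sdiff D hS] at h_null
  rwa [← h_null]

theorem red1_reduce_general {V : Type} [DecidableEq V] {α : V → Type}
    (D : InterventionFamily V α) (X Y Z : Finset V)
    (haff : affects D X Y Z)
    (sX : Finset V) (hsub : sX ⊆ X) (hne : sX.Nonempty) (hne' : sX ≠ X)
    (hred : ¬ affects D sX Y ((X \ sX) ∪ Z)) :
    affects D (X \ sX) Y Z ∧
      ∃ s : Finset V, s ⊂ X ∧ s.Nonempty ∧ affects D s Y Z := by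
  have hrest := affects_sdiff_of_not_affects hsub haff hred
  exact ⟨hrest, X \ sX, sdiff_ssubset hsub hne,
    sdiff_nonempty.mpr fun hX_sub => hne' (hsub.antisymm hX_sub), hrest⟩

/-- If `X ⊨ Y|do(Z)` holds and is Red₁, witnessed by a nonempty `s_X ⊊ X` with
`s_X ⊭ Y|do((X∖s_X) ∪ Z)`, then `(X∖s_X) ⊨ Y|do(Z)` holds; in particular there is
a nonempty strict subset `s̃_X ⊊ X` with `s̃_X ⊨ Y|do(Z)`. -/
theorem red1_reduce {V : Type} [Fintype V] [DecidableEq V] {α : V → Type}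
    [∀ i, Fintype (α i)] [∀ i, Nonempty (α i)]
    (D : InterventionFamily V α) (X Y Z : Finset V)
    (hXY : Disjoint X Y) (hXZ : Disjoint X Z) (hYZ : Disjoint Y Z)
    (hX : X.Nonempty) (hY : Y.Nonempty)
    (haff : affects D X Y Z)
    (sX : Finset V) (hsub : sX ⊆ X) (hne : sX.Nonempty) (hne' : sX ≠ X)
    (hred : ¬ affects D sX Y ((X \ sX) ∪ Z)) :
    affects D (X \ sX) Y Z ∧
      ∃ s : Finset V, s ⊂ X ∧ s.Nonempty ∧ affects D s Y Z :=
  red1_reduce_general D X Y Z haff sX hsub hne hne' hred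
end

section
/- Let D be an intervention family on V and let X, Y, Z be pairwise disjoint finite subsets of V with X, Y nonempty. If X ⊨ Y|do(Z) holds and is Clus₁ (that is, |X| ≥ 2 and no nonempty s_X ⊊ X satisfies s_X ⊨ Y|do(Z)), then it is Irred₁: for every nonempty s_X ⊊ X, the affects relation s_X ⊨ Y|do((X∖s_X) ∪ Z) holds. -/
/-!
If `s_X` did not affect `Y` under `do((X∖s_X) ∪ Z)`, then intervening on `X ∪ Z` could be
undone in two steps: first drop `s_X` (it has no effect given `(X∖s_X) ∪ Z`), then drop
`X∖s_X` (a nonempty proper subset of `X`, which has no effect given `Z` by Clus₁). So the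
marginal on `Y` would never change, contradicting `X ⊨ Y|do(Z)`.
-/

namespace InterventionFamily

variable {V : Type} [DecidableEq V] {α : V → Type}

theorem apply_congr (D : InterventionFamily V α) {I J : Finset V} (h : I = J)
    (a : ∀ i : I, α i) (b : ∀ i : J, α i)
    (hab : ∀ (i : V) (hI : i ∈ I) (hJ : i ∈ J), a ⟨i, hI⟩ = b ⟨i, hJ⟩) :
    D I a = D J b := by
  subst h
  congr 1
  funext i
  exact hab i i.2 i.2

theorem apply_union_union_combine (D : InterventionFamily V α) {S W Z : Finset V}
    (xv : ∀ i : (S ∪ W : Finset V), α i) (zv : ∀ i : Z, α i) :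
    D (S ∪ W ∪ Z) (combine xv zv) =
      D (S ∪ (W ∪ Z)) (combine (fun i : S => xv ⟨i, Finset.mem_union_left W i.2⟩)
        (combine (fun i : W => xv ⟨i, Finset.mem_union_right S i.2⟩) zv)) := by
  refine D.apply_congr (Finset.union_assoc S W Z) _ _ fun i _ _ => ?_
  by_cases hS : i ∈ S
  · simp [combine, hS]
  · by_cases hW : i ∈ W <;> simp [combine, hS, hW]

end InterventionFamily

section Affects

variable {V : Type} [DecidableEq V] {α : V → Type}

theorem not_affects_iff (D : InterventionFamily V α) (X Y Z : Finset V) :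
    ¬ affects D X Y Z ↔ ∀ (xv : ∀ i : X, α i) (zv : ∀ i : Z, α i),
      PMF.map (restrictTo Y) (D (X ∪ Z) (combine xv zv)) =
        PMF.map (restrictTo Y) (D Z zv) := by
  simp [affects]

theorem not_affects_union (D : InterventionFamily V α) {S W Y Z : Finset V}
    (hS : ¬ affects D S Y (W ∪ Z)) (hW : ¬ affects D W Y Z) :
    ¬ affects D (S ∪ W) Y Z := by
  rw [not_affects_iff] at hS hW ⊢
  intro xv zv
  rw [D.apply_union_union_combine, hS, hW]

end Affects

theorem clus1_implies_irred1_general {V : Type} [DecidableEq V] {α : V → Type}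
    (D : InterventionFamily V α) (X Y Z : Finset V)
    (haff : affects D X Y Z)
    (hclus : ∀ sX : Finset V, sX ⊂ X → sX.Nonempty → ¬ affects D sX Y Z) :
    ∀ sX : Finset V, sX ⊆ X → sX.Nonempty → sX ≠ X →
      affects D sX Y ((X \ sX) ∪ Z) := by
  intro sX hsub hne hneq
  by_contra hna
  have hrest : ¬ affects D (X \ sX) Y Z :=
    hclus _ (Finset.sdiff_ssubset hsub hne)
      (Finset.sdiff_nonempty.mpr fun h => hneq (hsub.antisymm h))
  have hunion := not_affects_union D hna hrest
  rw [Finset.union_sdiff_of_subset hsub] at hunion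
  exact hunion haff

/-- If `X ⊨ Y|do(Z)` holds and is Clus₁ (`|X| ≥ 2` and no nonempty `s_X ⊊ X`
satisfies `s_X ⊨ Y|do(Z)`), then it is Irred₁: for every nonempty `s_X ⊊ X`,
`s_X ⊨ Y|do((X∖s_X) ∪ Z)` holds. -/
theorem clus1_implies_irred1 {V : Type} [Fintype V] [DecidableEq V] {α : V → Type}
    [∀ i, Fintype (α i)] [∀ i, Nonempty (α i)]
    (D : InterventionFamily V α) (X Y Z : Finset V)
    (hXY : Disjoint X Y) (hXZ : Disjoint X Z) (hYZ : Disjoint Y Z)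
    (hX : X.Nonempty) (hY : Y.Nonempty)
    (haff : affects D X Y Z)
    (hcard : 2 ≤ X.card)
    (hclus : ∀ sX : Finset V, sX ⊂ X → sX.Nonempty → ¬ affects D sX Y Z) :
    ∀ sX : Finset V, sX ⊆ X → sX.Nonempty → sX ≠ X →
      affects D sX Y ((X \ sX) ∪ Z) :=
  clus1_implies_irred1_general D X Y Z haff hclus
end

section
/- Let D be an intervention family on V and let X, Y, Z be pairwise disjoint finite subsets of V with X, Y nonempty. If X ⊨ Y|do(Z) holds and is Clus₃ (that is, Z ≠ ∅ and no s_Z ⊊ Z satisfies X ⊨ Y|do(s_Z)), then it is Irred₃: for every nonempty s_Z ⊆ Z, the relation s_Z ⊨ Y|do(X ∪ (Z∖s_Z)) holds or the relation s_Z ⊨ Y|do(Z∖s_Z) holds. -/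
/-!
Suppose both disjunctions fail for some nonempty `S ⊆ Z`, and split an assignment `z` on `Z` into
its parts `s` on `S` and `w` on `Z \ S`. Since `X ∩ Z = ∅`, intervening on `X ∪ Z` with `x ⊕ z` is
intervening on `S ∪ (X ∪ (Z \ S))` with `s ⊕ (x ⊕ w)`. The three non-effects
`S ⊭ Y | do(X ∪ (Z \ S))`, `X ⊭ Y | do(Z \ S)` (Clus₃, as `Z \ S ⊊ Z`) and `S ⊭ Y | do(Z \ S)`
then chain the marginal on `Y` of `D (X ∪ Z) (x ⊕ z)` to that of `D Z z`, so `X ⊭ Y | do(Z)`.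
-/

theorem congr_apply_finset {V β : Type*} {α : V → Type*} (F : ∀ I : Finset V, (∀ i : I, α i) → β)
    {I J : Finset V} (h : I = J) {f : ∀ i : I, α i} {g : ∀ i : J, α i}
    (hfg : ∀ v (hI : v ∈ I) (hJ : v ∈ J), f ⟨v, hI⟩ = g ⟨v, hJ⟩) :
    F I f = F J g := by
  subst h
  rw [show f = g from funext fun i => hfg i i.2 i.2]

namespace InterventionFamily

variable {V : Type} [DecidableEq V] {α : V → Type} (D : InterventionFamily V α)

theorem apply_eq_apply_split {Z S : Finset V} (hS : S ⊆ Z) (zv : ∀ i : Z, α i) :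
    D Z zv = D (S ∪ (Z \ S)) (combine (Finset.restrict₂ hS zv)
      (Finset.restrict₂ Finset.sdiff_subset zv)) := by
  refine congr_apply_finset D (Finset.union_sdiff_of_subset hS).symm fun v _ _ => ?_
  by_cases hvS : v ∈ S <;> simp [combine, Finset.restrict₂, hvS]

theorem apply_combine_eq_apply_split {X Z S : Finset V} (hXZ : Disjoint X Z) (hS : S ⊆ Z)
    (xv : ∀ i : X, α i) (zv : ∀ i : Z, α i) :
    D (X ∪ Z) (combine xv zv) = D (S ∪ (X ∪ (Z \ S)))
      (combine (Finset.restrict₂ hS zv) (combine xv (Finset.restrict₂ Finset.sdiff_subset zv))) := by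
  have hunion : X ∪ Z = S ∪ (X ∪ (Z \ S)) := by
    rw [Finset.union_left_comm, Finset.union_sdiff_of_subset hS]
  refine congr_apply_finset D hunion fun v _ _ => ?_
  by_cases hvX : v ∈ X
  · have hvS : v ∉ S := fun hvS => Finset.disjoint_left.mp hXZ hvX (hS hvS)
    simp [combine, hvX, hvS]
  · by_cases hvS : v ∈ S <;> simp [combine, Finset.restrict₂, hvX, hvS]

theorem map_restrictTo_eq_of_not_affects {X Y Z : Finset V} (h : ¬ affects D X Y Z)
    (xv : ∀ i : X, α i) (zv : ∀ i : Z, α i) :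
    PMF.map (restrictTo Y) (D (X ∪ Z) (combine xv zv)) = PMF.map (restrictTo Y) (D Z zv) :=
  not_ne_iff.mp fun hne => h ⟨xv, zv, hne⟩

end InterventionFamily

theorem clus3_implies_irred3_general {V : Type} [DecidableEq V] {α : V → Type}
    (D : InterventionFamily V α) (X Y Z : Finset V)
    (hXZ : Disjoint X Z)
    (haff : affects D X Y Z)
    (hclus : ∀ sZ : Finset V, sZ ⊂ Z → ¬ affects D X Y sZ) :
    ∀ sZ : Finset V, sZ ⊆ Z → sZ.Nonempty →
      (affects D sZ Y (X ∪ (Z \ sZ)) ∨ affects D sZ Y (Z \ sZ)) := by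
  intro S hS hSne
  by_contra! ⟨hSXW, hSW⟩
  have hXW := hclus _ (Finset.sdiff_ssubset hS hSne)
  obtain ⟨xv, zv, hne⟩ := haff
  apply hne
  set s := Finset.restrict₂ hS zv
  set w := Finset.restrict₂ Finset.sdiff_subset zv
  calc PMF.map (restrictTo Y) (D (X ∪ Z) (combine xv zv))
      = PMF.map (restrictTo Y) (D (S ∪ (X ∪ (Z \ S))) (combine s (combine xv w))) := by
        rw [D.apply_combine_eq_apply_split hXZ hS]
    _ = PMF.map (restrictTo Y) (D (X ∪ (Z \ S)) (combine xv w)) :=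
        D.map_restrictTo_eq_of_not_affects hSXW _ _
    _ = PMF.map (restrictTo Y) (D (Z \ S) w) := D.map_restrictTo_eq_of_not_affects hXW _ _
    _ = PMF.map (restrictTo Y) (D (S ∪ (Z \ S)) (combine s w)) :=
        (D.map_restrictTo_eq_of_not_affects hSW _ _).symm
    _ = PMF.map (restrictTo Y) (D Z zv) := by rw [D.apply_eq_apply_split hS]

/-- If `X ⊨ Y|do(Z)` holds and is Clus₃ (`Z ≠ ∅` and no `s_Z ⊊ Z` satisfies
`X ⊨ Y|do(s_Z)`), then it is Irred₃: for every nonempty `s_Z ⊆ Z`, the relation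
`s_Z ⊨ Y|do(X ∪ (Z∖s_Z))` holds or the relation `s_Z ⊨ Y|do(Z∖s_Z)` holds. -/
theorem clus3_implies_irred3 {V : Type} [Fintype V] [DecidableEq V] {α : V → Type}
    [∀ i, Fintype (α i)] [∀ i, Nonempty (α i)]
    (D : InterventionFamily V α) (X Y Z : Finset V)
    (hXY : Disjoint X Y) (hXZ : Disjoint X Z) (hYZ : Disjoint Y Z)
    (hX : X.Nonempty) (hY : Y.Nonempty)
    (haff : affects D X Y Z)
    (hZ : Z.Nonempty)
    (hclus : ∀ sZ : Finset V, sZ ⊂ Z → ¬ affects D X Y sZ) :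
    ∀ sZ : Finset V, sZ ⊆ Z → sZ.Nonempty →
      (affects D sZ Y (X ∪ (Z \ sZ)) ∨ affects D sZ Y (Z \ sZ)) :=
  clus3_implies_irred3_general D X Y Z hXZ haff hclus
end

section
/- Let D be an intervention family on V and let X, Y, Z be pairwise disjoint finite subsets of V with X, Y nonempty. If X ⊨ Y|do(Z) holds and is Clus₁, then for all disjoint subsets s¹, s² ⊊ X with s¹ nonempty and s¹ ∪ s² ≠ X, one has s¹ ⊭ Y|do(s² ∪ Z). -/
/-!
Let `s¹ ∪ s² ⊊ X`. By minimality of `X`, neither `s¹ ∪ s²` nor `s²` affects `Y` given `do(Z)`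
(for `s² = ∅` this is trivial), so intervening on `s¹ ∪ s² ∪ Z` and on `s² ∪ Z` both give the
`Y`-marginal of `do(Z)`; hence additionally fixing `s¹` on top of `do(s² ∪ Z)` changes nothing.
-/

open Finset

section

variable {V : Type} [DecidableEq V] {α : V → Type}

theorem InterventionFamily.apply_congr_s16 (D : InterventionFamily V α) {I I' : Finset V}
    (h : I = I') {v : ∀ i : I, α i} {v' : ∀ i : I', α i}
    (hv : ∀ i (hi : i ∈ I) (hi' : i ∈ I'), v ⟨i, hi⟩ = v' ⟨i, hi'⟩) :
    D I v = D I' v' := by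
  subst h
  congr 1
  funext i
  exact hv i i.2 i.2

theorem combine_restrict₂_union {s Z : Finset V} (w : ∀ i : (s ∪ Z : Finset V), α i) :
    combine (restrict₂ subset_union_left w) (restrict₂ subset_union_right w) = w := by
  funext i
  unfold combine
  split_ifs <;> rfl

theorem InterventionFamily.apply_combine_union_assoc (D : InterventionFamily V α)
    {s₁ s₂ Z : Finset V} (x₁ : ∀ i : s₁, α i) (w : ∀ i : (s₂ ∪ Z : Finset V), α i) :
    D (s₁ ∪ (s₂ ∪ Z)) (combine x₁ w) =
      D (s₁ ∪ s₂ ∪ Z)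
        (combine (combine x₁ (restrict₂ subset_union_left w)) (restrict₂ subset_union_right w)) := by
  refine D.apply_congr_s16 (union_assoc s₁ s₂ Z).symm fun i hi hi' => ?_
  by_cases h₁ : i ∈ s₁
  · simp [combine, h₁]
  · by_cases h₂ : i ∈ s₂ <;> simp [combine, restrict₂, h₁, h₂]

theorem not_affects_empty (D : InterventionFamily V α) (Y Z : Finset V) :
    ¬ affects D ∅ Y Z := by
  rintro ⟨x, z, hne⟩
  exact hne (congrArg _ (D.apply_congr_s16 (empty_union Z) fun i _ _ => by simp [combine]))

theorem not_affects_union_of_not_affects {D : InterventionFamily V α} {s₁ s₂ Y Z : Finset V}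
    (h₁₂ : ¬ affects D (s₁ ∪ s₂) Y Z) (h₂ : ¬ affects D s₂ Y Z) :
    ¬ affects D s₁ Y (s₂ ∪ Z) := by
  simp only [affects, not_exists, not_not] at h₁₂ h₂ ⊢
  intro x₁ w
  set x₂ := restrict₂ (π := α) subset_union_left w
  set z := restrict₂ (π := α) subset_union_right w
  calc PMF.map (restrictTo Y) (D (s₁ ∪ (s₂ ∪ Z)) (combine x₁ w))
      = PMF.map (restrictTo Y) (D (s₁ ∪ s₂ ∪ Z) (combine (combine x₁ x₂) z)) := by
        rw [D.apply_combine_union_assoc]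
    _ = PMF.map (restrictTo Y) (D Z z) := h₁₂ _ _
    _ = PMF.map (restrictTo Y) (D (s₂ ∪ Z) (combine x₂ z)) := (h₂ _ _).symm
    _ = PMF.map (restrictTo Y) (D (s₂ ∪ Z) w) := by rw [combine_restrict₂_union]

end

theorem clus1_no_partial_affects_general {V : Type} [DecidableEq V] {α : V → Type}
    (D : InterventionFamily V α) (X Y Z : Finset V)
    (hclus : ∀ sX : Finset V, sX ⊂ X → sX.Nonempty → ¬ affects D sX Y Z) :
    ∀ s₁ s₂ : Finset V, s₁ ⊂ X → s₂ ⊂ X → Disjoint s₁ s₂ → s₁.Nonempty →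
      s₁ ∪ s₂ ≠ X → ¬ affects D s₁ Y (s₂ ∪ Z) := by
  have hproper : ∀ s ⊂ X, ¬ affects D s Y Z := fun s hs =>
    s.eq_empty_or_nonempty.elim (fun h => h ▸ not_affects_empty D Y Z) (hclus s hs)
  intro s₁ s₂ h₁ h₂ _ _ hunion
  exact not_affects_union_of_not_affects
    (hproper _ ((union_subset h₁.subset h₂.subset).ssubset_of_ne hunion)) (hproper s₂ h₂)

/-- If `X ⊨ Y|do(Z)` holds and is Clus₁, then for all disjoint `s¹, s² ⊊ X` with
`s¹` nonempty and `s¹ ∪ s² ≠ X`, one has `s¹ ⊭ Y|do(s² ∪ Z)`. -/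
theorem clus1_no_partial_affects {V : Type} [Fintype V] [DecidableEq V] {α : V → Type}
    [∀ i, Fintype (α i)] [∀ i, Nonempty (α i)]
    (D : InterventionFamily V α) (X Y Z : Finset V)
    (hXY : Disjoint X Y) (hXZ : Disjoint X Z) (hYZ : Disjoint Y Z)
    (hX : X.Nonempty) (hY : Y.Nonempty)
    (haff : affects D X Y Z)
    (hcard : 2 ≤ X.card)
    (hclus : ∀ sX : Finset V, sX ⊂ X → sX.Nonempty → ¬ affects D sX Y Z) :
    ∀ s₁ s₂ : Finset V, s₁ ⊂ X → s₂ ⊂ X → Disjoint s₁ s₂ → s₁.Nonempty →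
      s₁ ∪ s₂ ≠ X → ¬ affects D s₁ Y (s₂ ∪ Z) :=
  clus1_no_partial_affects_general D X Y Z hclus
end

section
/- Let D be an intervention family on V such that no induced affects relation is Clus₁. Then for all pairwise disjoint finite X, Y, Z ⊆ V with X, Y nonempty: if X ⊨ Y|do(Z) holds, then there exists e ∈ X such that {e} ⊨ Y|do(Z) holds. -/
/-- `X ⊨ Y|do(Z)` is Clus₁ if it holds, `|X| ≥ 2`, and no nonempty `s_X ⊊ X`
satisfies `s_X ⊨ Y|do(Z)`. -/
def Clus1 {V : Type} [DecidableEq V] {α : V → Type}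
    (D : InterventionFamily V α) (X Y Z : Finset V) : Prop :=
  affects D X Y Z ∧ 2 ≤ X.card ∧
    ∀ sX : Finset V, sX ⊂ X → sX.Nonempty → ¬ affects D sX Y Z

/-! Take a subset of `X` that is minimal among the nonempty sets affecting `Y` (finsets are
well-founded under `⊂`). With two or more elements it would be Clus₁, so it is a singleton. -/

theorem clus1_of_minimal_of_two_le_card {V : Type} [DecidableEq V] {α : V → Type}
    {D : InterventionFamily V α} {S Y Z : Finset V}
    (hmin : Minimal (fun T => T.Nonempty ∧ affects D T Y Z) S) (hcard : 2 ≤ S.card) :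
    Clus1 D S Y Z :=
  ⟨hmin.prop.2, hcard, fun _ hTS hT hTaff => hmin.not_prop_of_lt hTS ⟨hT, hTaff⟩⟩

theorem no_clus1_singleton_affects_general {V : Type} [DecidableEq V] {α : V → Type}
    (D : InterventionFamily V α)
    (hnoclus : ∀ X Y Z : Finset V, Disjoint X Y → Disjoint X Z → Disjoint Y Z →
      X.Nonempty → Y.Nonempty → ¬ Clus1 D X Y Z) :
    ∀ X Y Z : Finset V, Disjoint X Y → Disjoint X Z → Disjoint Y Z →
      X.Nonempty → Y.Nonempty → affects D X Y Z →
      ∃ e ∈ X, affects D {e} Y Z := by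
  intro X Y Z hXY hXZ hYZ hX hY hXaff
  obtain ⟨S, hSX, hSmin⟩ := exists_minimal_le_of_wellFoundedLT
    (fun T => T.Nonempty ∧ affects D T Y Z) X ⟨hX, hXaff⟩
  have hcard : ¬ 2 ≤ S.card := fun h2 =>
    hnoclus S Y Z (hXY.mono_left hSX) (hXZ.mono_left hSX) hYZ hSmin.prop.1 hY
      (clus1_of_minimal_of_two_le_card hSmin h2)
  obtain ⟨e, rfl⟩ := Finset.card_eq_one.mp <|
    le_antisymm (by omega) hSmin.prop.1.card_pos
  exact ⟨e, hSX (Finset.mem_singleton_self e), hSmin.prop.2⟩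

/-- If no induced affects relation of `D` is Clus₁, then any holding affects
relation `X ⊨ Y|do(Z)` can be reduced to a single variable: there is `e ∈ X` with
`{e} ⊨ Y|do(Z)`. -/
theorem no_clus1_singleton_affects {V : Type} [Fintype V] [DecidableEq V] {α : V → Type}
    [∀ i, Fintype (α i)] [∀ i, Nonempty (α i)]
    (D : InterventionFamily V α)
    (hnoclus : ∀ X Y Z : Finset V, Disjoint X Y → Disjoint X Z → Disjoint Y Z →
      X.Nonempty → Y.Nonempty → ¬ Clus1 D X Y Z) :
    ∀ X Y Z : Finset V, Disjoint X Y → Disjoint X Z → Disjoint Y Z →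
      X.Nonempty → Y.Nonempty → affects D X Y Z →
      ∃ e ∈ X, affects D {e} Y Z :=
  no_clus1_singleton_affects_general D hnoclus
end

section
/- Let D be an intervention family on V such that no induced affects relation is Clus₃. Then for all pairwise disjoint finite X, Y, Z ⊆ V with X, Y nonempty: if X ⊨ Y|do(Z) holds, then there exists e ∈ X such that {e} ⊨ Y holds (i.e., {e} ⊨ Y|do(∅)). -/
/-!
When no relation is Clus₃, `X ⊨ Y|do(Z)` with `Z ≠ ∅` always survives on some
`s_Z ⊊ Z`, so descending along strict subsets gives `X ⊨ Y|do(∅)`. To reach a single cause,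
write `X = {e} ∪ X'`: from `P_{X}(Y) ≠ P_∅(Y)` either `P_{X}(Y) ≠ P_{X'}(Y)`, i.e.
`{e} ⊨ Y|do(X')`, whose conditioning set can again be dropped, or `P_{X'}(Y) ≠ P_∅(Y)`, and we
recurse on `X'`.
-/

theorem Finset.apply_congr_of_eq {V β : Type*} {α : V → Type*}
    (f : ∀ I : Finset V, (∀ i : I, α i) → β) {A B : Finset V} (h : A = B)
    (vA : ∀ i : A, α i) (vB : ∀ i : B, α i)
    (hv : ∀ (i : V) (hA : i ∈ A) (hB : i ∈ B), vA ⟨i, hA⟩ = vB ⟨i, hB⟩) :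
    f A vA = f B vB := by
  subst h
  congr 1
  funext i
  exact hv i i.2 i.2

namespace InterventionFamily

variable {V : Type} [DecidableEq V] {α : V → Type} (D : InterventionFamily V α)

theorem not_affects_empty_left (Y Z : Finset V) : ¬ affects D ∅ Y Z := by
  rintro ⟨xv, zv, hne⟩
  refine hne (congrArg _ (Finset.apply_congr_of_eq D (Finset.empty_union Z) _ _ fun i _ hZ => ?_))
  simp [combine]

theorem affects_or_affects_of_affects_union {A B Y Z : Finset V} (h : affects D (A ∪ B) Y Z) :
    affects D A Y (B ∪ Z) ∨ affects D B Y Z := by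
  obtain ⟨xv, zv, hne⟩ := h
  let a : ∀ i : A, α i := fun i => xv ⟨i, Finset.mem_union_left _ i.2⟩
  let b : ∀ i : B, α i := fun i => xv ⟨i, Finset.mem_union_right _ i.2⟩
  have hsplit : D (A ∪ B ∪ Z) (combine xv zv) = D (A ∪ (B ∪ Z)) (combine a (combine b zv)) := by
    refine Finset.apply_congr_of_eq D (Finset.union_assoc A B Z) _ _ fun i _ _ => ?_
    by_cases hiA : i ∈ A <;> by_cases hiB : i ∈ B <;> simp [combine, a, b, hiA, hiB]
  by_cases hstep : PMF.map (restrictTo Y) (D (A ∪ (B ∪ Z)) (combine a (combine b zv))) =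
      PMF.map (restrictTo Y) (D (B ∪ Z) (combine b zv))
  · exact Or.inr ⟨b, zv, by rwa [hsplit, hstep] at hne⟩
  · exact Or.inl ⟨a, combine b zv, hstep⟩

theorem affects_empty_of_forall_not_clus3 {X Y Z : Finset V}
    (hclus : ∀ Z' ⊆ Z, ¬ Clus3 D X Y Z') (h : affects D X Y Z) : affects D X Y ∅ := by
  induction Z using Finset.strongInduction with
  | H Z ih =>
    rcases Z.eq_empty_or_nonempty with rfl | hZ
    · exact h
    · have hnot : ¬ Clus3 D X Y Z := hclus Z subset_rfl
      simp only [Clus3, h, hZ, true_and, not_forall, not_not] at hnot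
      obtain ⟨Z', hZ'Z, hZ'⟩ := hnot
      exact ih Z' hZ'Z (fun Z'' hZ'' => hclus Z'' (hZ''.trans hZ'Z.subset)) hZ'

theorem exists_singleton_affects_of_affects_empty {X Y : Finset V}
    (hclus : ∀ e ∈ X, ∀ Z ⊆ X.erase e, ¬ Clus3 D {e} Y Z) (h : affects D X Y ∅) :
    ∃ e ∈ X, affects D {e} Y ∅ := by
  induction X using Finset.induction_on with
  | empty => exact absurd h (D.not_affects_empty_left Y ∅)
  | insert e X heX ih =>
    rw [Finset.insert_eq] at h
    rcases D.affects_or_affects_of_affects_union h with he | hX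
    · refine ⟨e, Finset.mem_insert_self e X, D.affects_empty_of_forall_not_clus3 ?_ he⟩
      intro Z hZ
      refine hclus e (Finset.mem_insert_self e X) Z ?_
      rwa [Finset.erase_insert heX, ← Finset.union_empty X]
    · obtain ⟨e', he', hres⟩ := ih (fun e' he' Z hZ => hclus e' (Finset.mem_insert_of_mem he') Z
        (hZ.trans (Finset.erase_subset_erase e' (Finset.subset_insert e X)))) hX
      exact ⟨e', Finset.mem_insert_of_mem he', hres⟩

end InterventionFamily

theorem no_clus3_singleton_affects_general {V : Type} [DecidableEq V] {α : V → Type}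
    (D : InterventionFamily V α)
    (hnoclus : ∀ X Y Z : Finset V, Disjoint X Y → Disjoint X Z → Disjoint Y Z →
      X.Nonempty → Y.Nonempty → ¬ Clus3 D X Y Z) :
    ∀ X Y Z : Finset V, Disjoint X Y → Disjoint X Z → Disjoint Y Z →
      X.Nonempty → Y.Nonempty → affects D X Y Z →
      ∃ e ∈ X, affects D {e} Y ∅ := by
  intro X Y Z hXY hXZ hYZ hX hY h
  have hX0 : affects D X Y ∅ := D.affects_empty_of_forall_not_clus3
    (fun Z' hZ' => hnoclus X Y Z' hXY (hXZ.mono_right hZ') (hYZ.mono_right hZ') hX hY) h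
  refine D.exists_singleton_affects_of_affects_empty (fun e he Z hZ => ?_) hX0
  have hZX : Z ⊆ X := hZ.trans (Finset.erase_subset e X)
  exact hnoclus {e} Y Z (Finset.disjoint_singleton_left.mpr (Finset.disjoint_left.mp hXY he))
    (Finset.disjoint_singleton_left.mpr fun heZ => Finset.notMem_erase e X (hZ heZ))
    (hXY.symm.mono_right hZX) (Finset.singleton_nonempty e) hY

/-- If no induced affects relation of `D` is Clus₃, then any holding affects
relation `X ⊨ Y|do(Z)` yields `e ∈ X` with `{e} ⊨ Y` (i.e. `{e} ⊨ Y|do(∅)`). -/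
theorem no_clus3_singleton_affects {V : Type} [Fintype V] [DecidableEq V] {α : V → Type}
    [∀ i, Fintype (α i)] [∀ i, Nonempty (α i)]
    (D : InterventionFamily V α)
    (hnoclus : ∀ X Y Z : Finset V, Disjoint X Y → Disjoint X Z → Disjoint Y Z →
      X.Nonempty → Y.Nonempty → ¬ Clus3 D X Y Z) :
    ∀ X Y Z : Finset V, Disjoint X Y → Disjoint X Z → Disjoint Y Z →
      X.Nonempty → Y.Nonempty → affects D X Y Z →
      ∃ e ∈ X, affects D {e} Y ∅ :=
  no_clus3_singleton_affects_general D hnoclus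
end
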